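/- arXiv:1604.00473 — 2 statements merged into one kernel-verified Lean document; each statement's English description precedes it below -/
import Mathlib

section
/- Inversion of the Heisenberg group satisfies d_H(I(p), I(p')) = d_H(p, p') / (d_H(p, o) · d_H(o, p')) for all points p = (ζ, v), p' = (ζ', v') in ℂ × ℝ, both different from o = (0, 0). -/
open Complex

/-- The Cygan metric on `ℂ × ℝ × ℝ` (third coordinate is the height `u ≥ 0`). -/
noncomputable def cygan (p q : ℂ × ℝ × ℝ) : ℝ :=
  Real.sqrt (Norm.norm
    ((((Norm.norm (p.1 - q.1)) ^ 2 + |p.2.2 - q.2.2| : ℝ) : ℂ)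
      - Complex.I * (p.2.1 : ℂ) + Complex.I * (q.2.1 : ℂ)
      - 2 * Complex.I * (((p.1 * (starRingEnd ℂ) q.1).im : ℝ) : ℂ)))

/-- Heisenberg group multiplication on `ℂ × ℝ`. -/
noncomputable def hmul (p q : ℂ × ℝ) : ℂ × ℝ :=
  (p.1 + q.1, p.2 + q.2 + 2 * ((starRingEnd ℂ) q.1 * p.1).im)

/-- The Korányi gauge on `ℂ × ℝ`. -/
noncomputable def hgauge (p : ℂ × ℝ) : ℝ :=
  Real.sqrt (Norm.norm ((-((Norm.norm p.1) ^ 2 : ℝ) : ℂ) + Complex.I * (p.2 : ℂ)))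

/-- The Heisenberg (Korányi–Cygan) metric on `ℂ × ℝ`. -/
noncomputable def hdist (p q : ℂ × ℝ) : ℝ :=
  hgauge (hmul (-p.1, -p.2) q)

/-- Heisenberg inversion on `ℂ × ℝ`. -/
noncomputable def hinv (p : ℂ × ℝ) : ℂ × ℝ :=
  ((p.1 / ((-((Norm.norm p.1) ^ 2 : ℝ) : ℂ) + Complex.I * (p.2 : ℂ))),
    -p.2 / (Norm.norm ((-((Norm.norm p.1) ^ 2 : ℝ) : ℂ) + Complex.I * (p.2 : ℂ))) ^ 2)

/-- Cygan inversion on `ℂ × ℝ × ℝ`. -/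
noncomputable def cinv (p : ℂ × ℝ × ℝ) : ℂ × ℝ × ℝ :=
  (p.1 / ((-((Norm.norm p.1) ^ 2 : ℝ) : ℂ) + Complex.I * (p.2.1 : ℂ) - (p.2.2 : ℂ)),
    -p.2.1 / (Norm.norm ((-((Norm.norm p.1) ^ 2 : ℝ) : ℂ) + Complex.I * (p.2.1 : ℂ) - (p.2.2 : ℂ))) ^ 2,
    p.2.2 / (Norm.norm ((-((Norm.norm p.1) ^ 2 : ℝ) : ℂ) + Complex.I * (p.2.1 : ℂ) - (p.2.2 : ℂ))) ^ 2)

/-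
Write `w(ζ, v) = -|ζ|² + i v`, so that the gauge of `(ζ, v)` is `√|w(ζ, v)|`. Expanding the group
law, `d_H(p, q)² = |conj w(p) + w(q) + 2 conj ζ ζ'|`, and inversion acts by `w ↦ w⁻¹`, `ζ ↦ ζ / w`.
Substituting, the expression for `d_H(I p, I q)²` is the one for `d_H(p, q)²` divided by
`conj w(p) · w(q)`, whose modulus is `d_H(p, o)² d_H(o, q)²`.
-/

open ComplexConjugate

noncomputable def hw (p : ℂ × ℝ) : ℂ :=
  (-(‖p.1‖ ^ 2 : ℝ) : ℂ) + I * p.2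

lemma hw_ne_zero {p : ℂ × ℝ} (hp : p ≠ (0, 0)) : hw p ≠ 0 := by
  intro h
  have hre : ‖p.1‖ ^ 2 = 0 := by simpa [hw, ← Complex.ofReal_pow] using congrArg re h
  have him : p.2 = 0 := by simpa [hw, ← Complex.ofReal_pow] using congrArg im h
  exact hp (Prod.ext (by simpa using hre) him)

lemma hw_zero : hw (0, 0) = 0 := by simp [hw]

lemma conj_hw (p : ℂ × ℝ) : conj (hw p) = (-(‖p.1‖ ^ 2 : ℝ) : ℂ) - I * p.2 := by
  apply Complex.ext <;> simp [hw, sub_eq_add_neg]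

lemma hdist_eq_sqrt_norm (p q : ℂ × ℝ) :
    hdist p q = √‖conj (hw p) + hw q + 2 * conj p.1 * q.1‖ := by
  unfold hdist hgauge hmul hw
  congr 2
  apply Complex.ext <;> simp [Complex.sq_norm, Complex.normSq_apply] <;> ring

lemma hdist_zero_right (p : ℂ × ℝ) : hdist p (0, 0) = √‖hw p‖ := by
  simp [hdist_eq_sqrt_norm, hw_zero]

lemma hdist_zero_left (p : ℂ × ℝ) : hdist (0, 0) p = √‖hw p‖ := by
  simp [hdist_eq_sqrt_norm, hw_zero]

lemma hinv_fst (p : ℂ × ℝ) : (hinv p).1 = p.1 / hw p := rfl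

lemma hw_hinv (p : ℂ × ℝ) : hw (hinv p) = (hw p)⁻¹ := by
  by_cases hp : p = (0, 0)
  · subst hp
    simp [hinv, hw]
  have hn : (Complex.normSq (hw p) : ℂ) ≠ 0 := by simpa using hw_ne_zero hp
  show (-(‖p.1 / hw p‖ ^ 2 : ℝ) : ℂ) + I * ((-p.2 / ‖hw p‖ ^ 2 : ℝ) : ℂ) = (hw p)⁻¹
  rw [norm_div, div_pow, Complex.sq_norm, Complex.sq_norm, Complex.inv_def, conj_hw,
    ← Complex.sq_norm]
  push_cast
  field_simp
  ring

lemma conj_inv_add_inv_add_mul_div (a b z z' : ℂ) (ha : a ≠ 0) (hb : b ≠ 0) :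
    conj a⁻¹ + b⁻¹ + 2 * conj (z / a) * (z' / b) = (conj a + b + 2 * conj z * z') / (conj a * b) := by
  have ha' : conj a ≠ 0 := (map_ne_zero _).mpr ha
  rw [map_div₀, map_inv₀]
  field_simp
  ring

theorem hdist_hinv (p p' : ℂ × ℝ) (hp : p ≠ (0, 0)) (hp' : p' ≠ (0, 0)) :
    hdist (hinv p) (hinv p')
      = hdist p p' / (hdist p (0, 0) * hdist (0, 0) p') := by
  rw [hdist_eq_sqrt_norm, hw_hinv, hw_hinv, hinv_fst, hinv_fst,
    conj_inv_add_inv_add_mul_div _ _ _ _ (hw_ne_zero hp) (hw_ne_zero hp'), norm_div, norm_mul,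
    Complex.norm_conj, Real.sqrt_div (norm_nonneg _), Real.sqrt_mul (norm_nonneg _),
    hdist_eq_sqrt_norm, hdist_zero_right, hdist_zero_left]
end

section
/- The Cygan inversion I is an involution: I(I(ζ, v, u)) = (ζ, v, u) for every (ζ, v, u) in ℂ × ℝ × ℝ≥0 with (ζ, v, u) ≠ (0, 0, 0). -/
open Complex

noncomputable def cinvDenom (p : ℂ × ℝ × ℝ) : ℂ :=
  (-((Norm.norm p.1) ^ 2 : ℝ) : ℂ) + Complex.I * (p.2.1 : ℂ) - (p.2.2 : ℂ)

theorem cinv_eq (p : ℂ × ℝ × ℝ) :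
    cinv p = (p.1 / cinvDenom p, -p.2.1 / ‖cinvDenom p‖ ^ 2, p.2.2 / ‖cinvDenom p‖ ^ 2) :=
  rfl

theorem cinvDenom_re (p : ℂ × ℝ × ℝ) : (cinvDenom p).re = -‖p.1‖ ^ 2 - p.2.2 := by
  simp [cinvDenom, -Complex.ofReal_pow]

theorem cinvDenom_im (p : ℂ × ℝ × ℝ) : (cinvDenom p).im = p.2.1 := by
  simp [cinvDenom, -Complex.ofReal_pow]

theorem cinvDenom_ne_zero {p : ℂ × ℝ × ℝ} (hp0 : 0 ≤ p.2.2) (hp : p ≠ (0, 0, 0)) :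
    cinvDenom p ≠ 0 := by
  obtain ⟨ζ, v, u⟩ := p
  intro h
  have hre : -‖ζ‖ ^ 2 - u = 0 := by simpa [h] using (cinvDenom_re (ζ, v, u)).symm
  have hv : v = 0 := by simpa [h] using (cinvDenom_im (ζ, v, u)).symm
  have hu : u = 0 := by nlinarith [sq_nonneg ‖ζ‖]
  have hζ : ζ = 0 := by simpa [hu] using hre
  exact hp (by simp [hζ, hv, hu])

/-- With `w = cinvDenom p`, the image point has denominator `w̄ / |w|² = w⁻¹`, which is why a
second inversion undoes the first. -/
theorem cinvDenom_cinv (p : ℂ × ℝ × ℝ) : cinvDenom (cinv p) = (cinvDenom p)⁻¹ := by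
  apply Complex.ext
  · simp only [cinvDenom_re, Complex.inv_re, cinv_eq, norm_div, div_pow, Complex.normSq_eq_norm_sq]
    ring
  · simp only [cinvDenom_im, Complex.inv_im, cinv_eq, Complex.normSq_eq_norm_sq, neg_div]

theorem cinv_involution (p : ℂ × ℝ × ℝ) (hp0 : 0 ≤ p.2.2)
    (hp : p ≠ (0, 0, 0)) : cinv (cinv p) = p := by
  have hw := cinvDenom_ne_zero hp0 hp
  have hnw : ‖cinvDenom p‖ ≠ 0 := norm_ne_zero_iff.mpr hw
  rw [cinv_eq (cinv p), cinvDenom_cinv, norm_inv]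
  obtain ⟨ζ, v, u⟩ := p
  simp only [cinv_eq, div_inv_eq_mul, inv_pow, Prod.mk.injEq]
  refine ⟨div_mul_cancel₀ ζ hw, ?_, ?_⟩ <;> field_simp
end
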